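/- arXiv:math/0407318 — 3 statements merged into one kernel-verified Lean document; each statement's English description precedes it below -/
import Mathlib

section
/- Let φ, ψ : ℝ^d → ℝ be smooth functions with compact support. Then the function α ↦ ∫_{ℝ^d} ∫_{ℝ^d} (ψ(y) − ψ(x)) (φ(y) − φ(x)) / |y − x|^{d+α} dy dx is well defined (the integral is absolutely convergent) and continuous on the interval (0,2). -/
open MeasureTheory Real Filter Topology
open scoped ENNReal NNReal

section AuxLemmas

variable {E : Type*} [NormedAddCommGroup E] [NormedSpace ℝ E] [MeasurableSpace E]
  [BorelSpace E] [FiniteDimensional ℝ E]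

omit [BorelSpace E] [FiniteDimensional ℝ E] in
lemma aux_indicator_compl_bound {e : ℝ} (he : e ≤ 0) (z : E) :
    ‖((Metric.ball (0:E) 1)ᶜ).indicator (fun z => ‖z‖ ^ e) z‖
      ≤ (2:ℝ) ^ (-e) * (1 + ‖z‖) ^ e := by
  have hpos : (0:ℝ) ≤ (2:ℝ) ^ (-e) * (1 + ‖z‖) ^ e := by positivity
  by_cases hz : z ∈ (Metric.ball (0:E) 1)ᶜ
  · rw [Set.indicator_of_mem hz, Real.norm_of_nonneg (Real.rpow_nonneg (norm_nonneg z) e)]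
    have h1 : (1:ℝ) ≤ ‖z‖ := by
      simpa [Metric.mem_ball, not_lt] using hz
    have h2 : (1 + ‖z‖) ≤ 2 * ‖z‖ := by linarith
    have h3 : ((2:ℝ) * ‖z‖) ^ e ≤ (1 + ‖z‖) ^ e :=
      Real.rpow_le_rpow_of_nonpos (by linarith) h2 he
    have h4 : ((2:ℝ) * ‖z‖) ^ e = (2:ℝ) ^ e * ‖z‖ ^ e :=
      Real.mul_rpow (by norm_num) (norm_nonneg z)
    have h5 : (2:ℝ) ^ (-e) * ((2:ℝ) ^ e * ‖z‖ ^ e) = ‖z‖ ^ e := by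
      rw [← mul_assoc, ← Real.rpow_add (by norm_num : (0:ℝ) < 2)]
      simp
    calc ‖z‖ ^ e = (2:ℝ) ^ (-e) * ((2:ℝ) * ‖z‖) ^ e := by rw [h4, h5]
      _ ≤ (2:ℝ) ^ (-e) * (1 + ‖z‖) ^ e :=
          mul_le_mul_of_nonneg_left h3 (Real.rpow_nonneg (by norm_num) _)
  · rw [Set.indicator_of_notMem hz]
    simpa using hpos

lemma aux_integrable_rpow_norm_compl (μ : Measure E) [μ.IsAddHaarMeasure] {e : ℝ}
    (he : e < -(Module.finrank ℝ E : ℝ)) :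
    Integrable (((Metric.ball (0:E) 1)ᶜ).indicator (fun z => ‖z‖ ^ e)) μ := by
  have hdR : (0:ℝ) ≤ (Module.finrank ℝ E : ℝ) := Nat.cast_nonneg _
  have he0 : e ≤ 0 := by linarith
  have hint : Integrable (fun z : E => (1 + ‖z‖) ^ (-(-e))) μ :=
    integrable_one_add_norm (by linarith : (Module.finrank ℝ E : ℝ) < -e)
  simp only [neg_neg] at hint
  refine Integrable.mono' (hint.const_mul ((2:ℝ) ^ (-e))) ?_ ?_
  · exact ((by fun_prop : Measurable fun z : E => ‖z‖ ^ e).indicator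
      measurableSet_ball.compl).aestronglyMeasurable
  · exact Filter.Eventually.of_forall (aux_indicator_compl_bound he0)

variable [Nontrivial E]

lemma aux_integrableOn_rpow_norm_ball (μ : Measure E) [μ.IsAddHaarMeasure] {e : ℝ}
    (he : -(Module.finrank ℝ E : ℝ) < e) :
    IntegrableOn (fun z : E => ‖z‖ ^ e) (Metric.ball 0 1) μ := by
  set n : ℕ := Module.finrank ℝ E - 1 with hn
  have hdim : 0 < Module.finrank ℝ E := Module.finrank_pos
  have hnc : (n : ℝ) = (Module.finrank ℝ E : ℝ) - 1 := by
    rw [hn, Nat.cast_pred hdim]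
  set g : ℝ → ℝ≥0∞ := fun r => ENNReal.ofReal (r ^ e) * (Set.Ioo (0:ℝ) 1).indicator 1 r with hg
  have hgmeas : Measurable g := by
    apply Measurable.mul
    · exact (by fun_prop : Measurable fun r : ℝ => r ^ e).ennreal_ofReal
    · exact measurable_one.indicator measurableSet_Ioo
  constructor
  · exact (by fun_prop : Measurable fun z : E => ‖z‖ ^ e).aestronglyMeasurable
  rw [hasFiniteIntegral_iff_norm]
  have h0 : ∀ᵐ z ∂μ, z ≠ (0:E) := by
    rw [ae_iff]
    simpa using measure_singleton (0:E)
  have step1 : ∫⁻ z in Metric.ball 0 1, ENNReal.ofReal ‖‖z‖ ^ e‖ ∂μ = ∫⁻ z, g ‖z‖ ∂μ := by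
    rw [← lintegral_indicator measurableSet_ball]
    refine lintegral_congr_ae ?_
    filter_upwards [h0] with z hz
    by_cases hzb : z ∈ Metric.ball (0:E) 1
    · rw [Set.indicator_of_mem hzb]
      have h1 : ‖z‖ ∈ Set.Ioo (0:ℝ) 1 :=
        ⟨norm_pos_iff.2 hz, by simpa [mem_ball_zero_iff] using hzb⟩
      rw [hg]
      simp only [Set.indicator_of_mem h1, Pi.one_apply, mul_one]
      rw [Real.norm_of_nonneg (Real.rpow_nonneg (norm_nonneg z) e)]
    · rw [Set.indicator_of_notMem hzb]
      have h1 : ‖z‖ ∉ Set.Ioo (0:ℝ) 1 := by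
        simp only [mem_ball_zero_iff, not_lt] at hzb
        simp [Set.mem_Ioo, not_lt.2 hzb]
      rw [hg]
      simp [Set.indicator_of_notMem h1]
  rw [step1]
  have step2 : ∫⁻ z, g ‖z‖ ∂μ = ∫⁻ x : ({0}ᶜ : Set E), g ‖(x : E)‖ ∂(μ.comap (↑)) := by
    have := lintegral_subtype_comap (μ := μ) (measurableSet_singleton (0:E)).compl
      (fun z : E => g ‖z‖)
    rw [this, MeasureTheory.restrict_compl_singleton]
  rw [step2]
  have step3 : ∫⁻ x : ({0}ᶜ : Set E), g ‖(x : E)‖ ∂(μ.comap (↑))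
      = ∫⁻ p : Metric.sphere (0:E) 1 × Set.Ioi (0:ℝ), g p.2
          ∂(μ.toSphere.prod (Measure.volumeIoiPow n)) := by
    have := (Measure.measurePreserving_homeomorphUnitSphereProd μ).lintegral_comp
      (f := fun p : Metric.sphere (0:E) 1 × Set.Ioi (0:ℝ) => g p.2)
      (hgmeas.comp (measurable_subtype_coe.comp measurable_snd))
    rw [← this]
    congr 1
    funext x
    simp only [homeomorphUnitSphereProd_apply_snd_coe]
  rw [step3]
  have step4 : ∫⁻ p : Metric.sphere (0:E) 1 × Set.Ioi (0:ℝ), g p.2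
        ∂(μ.toSphere.prod (Measure.volumeIoiPow n))
      = μ.toSphere Set.univ * ∫⁻ r : Set.Ioi (0:ℝ), g r ∂(Measure.volumeIoiPow n) := by
    rw [MeasureTheory.lintegral_prod (fun p : Metric.sphere (0:E) 1 × Set.Ioi (0:ℝ) => g p.2)
      ((hgmeas.comp (measurable_subtype_coe.comp measurable_snd)).aemeasurable)]
    simp [lintegral_const, mul_comm]
  rw [step4]
  refine ENNReal.mul_lt_top (measure_lt_top _ _) ?_
  have step5 : ∫⁻ r : Set.Ioi (0:ℝ), g r ∂(Measure.volumeIoiPow n)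
      = ∫⁻ r in Set.Ioi (0:ℝ), ENNReal.ofReal (r ^ n) * g r := by
    rw [Measure.volumeIoiPow]
    have hmg : Measurable (fun r : Set.Ioi (0:ℝ) => g r.1) := hgmeas.comp measurable_subtype_coe
    rw [lintegral_withDensity_eq_lintegral_mul _
      (f := fun r : Set.Ioi (0:ℝ) => ENNReal.ofReal (r.1 ^ n))
      (by fun_prop) hmg]
    have := lintegral_subtype_comap (μ := (volume : Measure ℝ))
      (measurableSet_Ioi (a := (0:ℝ)))
      (fun r : ℝ => ENNReal.ofReal (r ^ n) * g r)
    simpa using this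
  rw [step5]
  have step6 : ∫⁻ r in Set.Ioi (0:ℝ), ENNReal.ofReal (r ^ n) * g r
      = ∫⁻ r in Set.Ioo (0:ℝ) 1, ENNReal.ofReal (r ^ ((n : ℝ) + e)) := by
    have heq : ∫⁻ r in Set.Ioi (0:ℝ), ENNReal.ofReal (r ^ n) * g r
        = ∫⁻ r in Set.Ioi (0:ℝ),
            (Set.Ioo (0:ℝ) 1).indicator (fun r => ENNReal.ofReal (r ^ ((n:ℝ) + e))) r := by
      refine setLIntegral_congr_fun measurableSet_Ioi ?_
      intro r hr
      have hr' : (0:ℝ) < r := hr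
      by_cases h1 : r ∈ Set.Ioo (0:ℝ) 1
      · rw [Set.indicator_of_mem h1, hg]
        simp only [Set.indicator_of_mem h1, Pi.one_apply, mul_one]
        rw [← ENNReal.ofReal_mul (by positivity)]
        congr 1
        rw [← Real.rpow_natCast r n, ← Real.rpow_add hr']
      · rw [Set.indicator_of_notMem h1, hg]
        simp [Set.indicator_of_notMem h1]
    rw [heq, lintegral_indicator measurableSet_Ioo, Measure.restrict_restrict measurableSet_Ioo,
      Set.inter_eq_left.2 Set.Ioo_subset_Ioi_self]
  rw [step6]
  have he' : (-1 : ℝ) < (n : ℝ) + e := by rw [hnc]; linarith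
  have hint : IntegrableOn (fun r : ℝ => r ^ ((n:ℝ) + e)) (Set.Ioo (0:ℝ) 1) :=
    (intervalIntegral.integrableOn_Ioo_rpow_iff one_pos).2 he'
  have hfin := hint.2
  rw [hasFiniteIntegral_iff_norm] at hfin
  refine lt_of_le_of_lt (le_of_eq ?_) hfin
  refine setLIntegral_congr_fun measurableSet_Ioo ?_
  intro r hr
  dsimp only
  rw [Real.norm_of_nonneg (Real.rpow_nonneg hr.1.le _)]

end AuxLemmas

/-- **Lemma 2.1**: for smooth compactly supported `φ, ψ : ℝ^d → ℝ`, the double integral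
`∫∫ (ψ(y) − ψ(x))(φ(y) − φ(x)) / |y − x|^{d+α} dy dx` is absolutely convergent for every
`α ∈ (0,2)`, and is a continuous function of `α` on `(0,2)`. -/
theorem dirichletForm_integrable_and_continuous
    (d : ℕ) (φ ψ : EuclideanSpace ℝ (Fin d) → ℝ)
    (hφ : ContDiff ℝ (⊤ : ℕ∞) φ) (hφs : HasCompactSupport φ)
    (hψ : ContDiff ℝ (⊤ : ℕ∞) ψ) (hψs : HasCompactSupport ψ) :
    (∀ α ∈ Set.Ioo (0 : ℝ) 2,
      Integrable (fun p : EuclideanSpace ℝ (Fin d) × EuclideanSpace ℝ (Fin d) =>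
        (ψ p.2 - ψ p.1) * (φ p.2 - φ p.1) / ‖p.2 - p.1‖ ^ ((d : ℝ) + α))) ∧
    ContinuousOn
      (fun α : ℝ => ∫ p : EuclideanSpace ℝ (Fin d) × EuclideanSpace ℝ (Fin d),
        (ψ p.2 - ψ p.1) * (φ p.2 - φ p.1) / ‖p.2 - p.1‖ ^ ((d : ℝ) + α))
      (Set.Ioo (0 : ℝ) 2) := by
  classical
  by_cases hd : d = 0
  · subst hd
    have hp : ∀ p : EuclideanSpace ℝ (Fin 0) × EuclideanSpace ℝ (Fin 0), p.2 = p.1 :=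
      fun p => Subsingleton.elim _ _
    have hfun : ∀ α : ℝ,
        (fun p : EuclideanSpace ℝ (Fin 0) × EuclideanSpace ℝ (Fin 0) =>
          (ψ p.2 - ψ p.1) * (φ p.2 - φ p.1) / ‖p.2 - p.1‖ ^ ((0 : ℝ) + α))
          = fun _ => (0:ℝ) := by
      intro α
      funext p
      rw [hp p]
      simp
    constructor
    · intro α _
      rw [show ((0:ℕ):ℝ) = (0:ℝ) from by norm_num, hfun α]
      exact integrable_zero _ _ _
    · have heq : (fun α : ℝ => ∫ p : EuclideanSpace ℝ (Fin 0) × EuclideanSpace ℝ (Fin 0),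
          (ψ p.2 - ψ p.1) * (φ p.2 - φ p.1) / ‖p.2 - p.1‖ ^ (((0:ℕ) : ℝ) + α))
          = fun _ => (0:ℝ) := by
        funext α
        rw [show ((0:ℕ):ℝ) = (0:ℝ) from by norm_num, hfun α]
        exact integral_zero _ _
      rw [heq]
      exact continuousOn_const
  -- main case : d ≥ 1
  have hd' : 0 < d := Nat.pos_of_ne_zero hd
  haveI : Nonempty (Fin d) := ⟨⟨0, hd'⟩⟩
  haveI : Nontrivial (EuclideanSpace ℝ (Fin d)) := by infer_instance
  have hfr : (Module.finrank ℝ (EuclideanSpace ℝ (Fin d)) : ℝ) = (d:ℝ) := by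
    rw [finrank_euclideanSpace_fin]
  -- constants
  obtain ⟨Lψ, hLψ⟩ := hψ.lipschitzWith_of_hasCompactSupport hψs (by simp)
  obtain ⟨Lφ, hLφ⟩ := hφ.lipschitzWith_of_hasCompactSupport hφs (by simp)
  obtain ⟨Mψ, hMψ⟩ := hψs.exists_bound_of_continuous hψ.continuous
  obtain ⟨Mφ, hMφ⟩ := hφs.exists_bound_of_continuous hφ.continuous
  have hMψ0 : 0 ≤ Mψ := le_trans (norm_nonneg (ψ 0)) (hMψ 0)
  have hMφ0 : 0 ≤ Mφ := le_trans (norm_nonneg (φ 0)) (hMφ 0)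
  set K : Set (EuclideanSpace ℝ (Fin d)) := tsupport ψ ∪ tsupport φ with hKdef
  have hKc : IsCompact K := hψs.union hφs
  set K₁ : Set (EuclideanSpace ℝ (Fin d)) := Metric.cthickening 1 K with hK₁def
  have hK₁c : IsCompact K₁ := hKc.cthickening
  set C₁ : ℝ := (Lψ : ℝ) * (Lφ : ℝ) with hC₁def
  set C₂ : ℝ := (2 * Mψ) * (2 * Mφ) with hC₂def
  have hC₁0 : 0 ≤ C₁ := mul_nonneg Lψ.coe_nonneg Lφ.coe_nonneg
  have hC₂0 : 0 ≤ C₂ := mul_nonneg (by linarith) (by linarith)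
  set f₁ : (EuclideanSpace ℝ (Fin d)) → ℝ := K₁.indicator 1 with hf₁def
  set f₂ : (EuclideanSpace ℝ (Fin d)) → ℝ := K.indicator 1 with hf₂def
  set h₁ : ℝ → (EuclideanSpace ℝ (Fin d)) → ℝ := fun u => (Metric.ball (0:(EuclideanSpace ℝ (Fin d))) 1).indicator (fun z => ‖z‖ ^ u) with hh₁def
  set h₂ : ℝ → (EuclideanSpace ℝ (Fin d)) → ℝ := fun v => ((Metric.ball (0:(EuclideanSpace ℝ (Fin d))) 1)ᶜ).indicator (fun z => ‖z‖ ^ v) with hh₂def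
  set G : ℝ → ℝ → (EuclideanSpace ℝ (Fin d)) × (EuclideanSpace ℝ (Fin d)) → ℝ := fun u v p =>
    C₁ * (f₁ p.1 * h₁ u (p.2 - p.1)) +
      (C₂ * (f₂ p.1 * h₂ v (p.2 - p.1)) + C₂ * (f₂ p.2 * h₂ v (p.2 - p.1))) with hGdef
  have hf₁0 : ∀ x, 0 ≤ f₁ x := fun x => Set.indicator_nonneg (fun _ _ => zero_le_one) x
  have hf₂0 : ∀ x, 0 ≤ f₂ x := fun x => Set.indicator_nonneg (fun _ _ => zero_le_one) x
  have hh₁0 : ∀ u z, 0 ≤ h₁ u z := fun u z =>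
    Set.indicator_nonneg (fun z _ => Real.rpow_nonneg (norm_nonneg z) u) z
  have hh₂0 : ∀ v z, 0 ≤ h₂ v z := fun v z =>
    Set.indicator_nonneg (fun z _ => Real.rpow_nonneg (norm_nonneg z) v) z
  have hG0 : ∀ u v p, 0 ≤ G u v p := by
    intro u v p
    have t1 : 0 ≤ C₁ * (f₁ p.1 * h₁ u (p.2 - p.1)) :=
      mul_nonneg hC₁0 (mul_nonneg (hf₁0 _) (hh₁0 _ _))
    have t2 : 0 ≤ C₂ * (f₂ p.1 * h₂ v (p.2 - p.1)) :=
      mul_nonneg hC₂0 (mul_nonneg (hf₂0 _) (hh₂0 _ _))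
    have t3 : 0 ≤ C₂ * (f₂ p.2 * h₂ v (p.2 - p.1)) :=
      mul_nonneg hC₂0 (mul_nonneg (hf₂0 _) (hh₂0 _ _))
    have := add_nonneg t1 (add_nonneg t2 t3)
    exact this
  -- integrability of the components
  have hf₁i : Integrable f₁ (volume : Measure (EuclideanSpace ℝ (Fin d))) :=
    (integrable_indicator_iff hK₁c.measurableSet).2
      (integrableOn_const hK₁c.measure_lt_top.ne)
  have hf₂i : Integrable f₂ (volume : Measure (EuclideanSpace ℝ (Fin d))) :=
    (integrable_indicator_iff hKc.measurableSet).2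
      (integrableOn_const hKc.measure_lt_top.ne)
  have hh₁i : ∀ u : ℝ, -(d:ℝ) < u → Integrable (h₁ u) (volume : Measure (EuclideanSpace ℝ (Fin d))) := by
    intro u hu
    refine (integrable_indicator_iff measurableSet_ball).2 ?_
    exact aux_integrableOn_rpow_norm_ball (volume : Measure (EuclideanSpace ℝ (Fin d))) (by rw [hfr]; exact hu)
  have hh₂i : ∀ v : ℝ, v < -(d:ℝ) → Integrable (h₂ v) (volume : Measure (EuclideanSpace ℝ (Fin d))) := by
    intro v hv
    exact aux_integrable_rpow_norm_compl (volume : Measure (EuclideanSpace ℝ (Fin d))) (by rw [hfr]; exact hv)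
  have hh₂symm : ∀ (v : ℝ) (z : (EuclideanSpace ℝ (Fin d))), h₂ v (-z) = h₂ v z := by
    intro v z
    simp [hh₂def, Set.indicator_apply, Metric.mem_ball, dist_zero_right]
  -- product integrability via measure preserving shears
  have prodInt : ∀ (f h : (EuclideanSpace ℝ (Fin d)) → ℝ), Integrable f (volume : Measure (EuclideanSpace ℝ (Fin d))) →
      Integrable h (volume : Measure (EuclideanSpace ℝ (Fin d))) →
      Integrable (fun p : (EuclideanSpace ℝ (Fin d)) × (EuclideanSpace ℝ (Fin d)) => f p.1 * h (p.2 - p.1)) (volume : Measure ((EuclideanSpace ℝ (Fin d)) × (EuclideanSpace ℝ (Fin d)))) := by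
    intro f h hf hh
    have mp := measurePreserving_prod_sub (μ := (volume : Measure (EuclideanSpace ℝ (Fin d)))) (ν := (volume : Measure (EuclideanSpace ℝ (Fin d))))
    have hi := hf.mul_prod hh
    exact (mp.integrable_comp hi.aestronglyMeasurable).2 hi
  have prodInt2 : ∀ (f h : (EuclideanSpace ℝ (Fin d)) → ℝ), Integrable f (volume : Measure (EuclideanSpace ℝ (Fin d))) →
      Integrable h (volume : Measure (EuclideanSpace ℝ (Fin d))) → (∀ z, h (-z) = h z) →
      Integrable (fun p : (EuclideanSpace ℝ (Fin d)) × (EuclideanSpace ℝ (Fin d)) => f p.2 * h (p.2 - p.1)) (volume : Measure ((EuclideanSpace ℝ (Fin d)) × (EuclideanSpace ℝ (Fin d)))) := by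
    intro f h hf hh hsymm
    have mp := measurePreserving_prod_sub_swap
      (μ := (volume : Measure (EuclideanSpace ℝ (Fin d)))) (ν := (volume : Measure (EuclideanSpace ℝ (Fin d))))
    have hi := hf.mul_prod hh
    have h2 := (mp.integrable_comp hi.aestronglyMeasurable).2 hi
    have heq : (fun p : (EuclideanSpace ℝ (Fin d)) × (EuclideanSpace ℝ (Fin d)) => f p.2 * h (p.2 - p.1))
        = (fun q : (EuclideanSpace ℝ (Fin d)) × (EuclideanSpace ℝ (Fin d)) => f q.1 * h q.2) ∘ (fun z : (EuclideanSpace ℝ (Fin d)) × (EuclideanSpace ℝ (Fin d)) => (z.2, z.1 - z.2)) := by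
      funext p
      simp only [Function.comp_apply]
      rw [← hsymm (p.1 - p.2), neg_sub]
    rw [heq]
    exact h2
  have hGint : ∀ u v : ℝ, -(d:ℝ) < u → v < -(d:ℝ) →
      Integrable (G u v) (volume : Measure ((EuclideanSpace ℝ (Fin d)) × (EuclideanSpace ℝ (Fin d)))) := by
    intro u v hu hv
    exact (((prodInt _ _ hf₁i (hh₁i u hu)).const_mul C₁).add
      (((prodInt _ _ hf₂i (hh₂i v hv)).const_mul C₂).add
        ((prodInt2 _ _ hf₂i (hh₂i v hv) (hh₂symm v)).const_mul C₂)))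
  -- pointwise bound
  have hFbound : ∀ (α u v : ℝ), 0 < α → u ≤ 2 - ((d:ℝ) + α) → -((d:ℝ) + α) ≤ v →
      ∀ p : (EuclideanSpace ℝ (Fin d)) × (EuclideanSpace ℝ (Fin d)),
        ‖(ψ p.2 - ψ p.1) * (φ p.2 - φ p.1) / ‖p.2 - p.1‖ ^ ((d : ℝ) + α)‖ ≤ G u v p := by
    intro α u v hα hu hv p
    set z : (EuclideanSpace ℝ (Fin d)) := p.2 - p.1 with hzdef
    set N : ℝ := (ψ p.2 - ψ p.1) * (φ p.2 - φ p.1) with hNdef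
    by_cases hN0 : N = 0
    · rw [hN0, zero_div, norm_zero]
      exact hG0 u v p
    have hxy : p.1 ∈ K ∨ p.2 ∈ K := by
      by_contra hcon
      push_neg at hcon
      obtain ⟨h1, h2⟩ := hcon
      apply hN0
      have hψ1 : ψ p.1 = 0 := image_eq_zero_of_notMem_tsupport (fun hm => h1 (Or.inl hm))
      have hψ2 : ψ p.2 = 0 := image_eq_zero_of_notMem_tsupport (fun hm => h2 (Or.inl hm))
      rw [hNdef, hψ1, hψ2]
      ring
    have hz0 : z ≠ 0 := by
      intro h
      apply hN0
      have h21 : p.2 = p.1 := by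
        have := sub_eq_zero.1 h
        exact this
      rw [hNdef, h21]
      ring
    have hznorm : (0:ℝ) < ‖z‖ := norm_pos_iff.2 hz0
    have habs : ‖N / ‖z‖ ^ ((d:ℝ)+α)‖ = |N| / ‖z‖ ^ ((d:ℝ)+α) := by
      rw [Real.norm_eq_abs, abs_div, abs_of_nonneg (Real.rpow_nonneg (norm_nonneg z) _)]
    rw [habs]
    by_cases hball : ‖z‖ < 1
    · -- near regime
      have hx1 : p.1 ∈ K₁ := by
        rcases hxy with h | h
        · exact Metric.self_subset_cthickening K h
        · refine Metric.mem_cthickening_of_dist_le p.1 p.2 1 K h ?_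
          rw [dist_eq_norm, ← norm_neg, neg_sub]
          exact hball.le
      have hf₁x : f₁ p.1 = 1 := by rw [hf₁def, Set.indicator_of_mem hx1]; rfl
      have hh₁z : h₁ u z = ‖z‖ ^ u := by
        rw [hh₁def]
        exact Set.indicator_of_mem (mem_ball_zero_iff.2 hball) _
      have hNle : |N| ≤ C₁ * (‖z‖ * ‖z‖) := by
        rw [hNdef, abs_mul]
        have l1 : |ψ p.2 - ψ p.1| ≤ (Lψ:ℝ) * ‖z‖ := by
          have := hLψ.dist_le_mul p.2 p.1
          rw [Real.dist_eq, dist_eq_norm] at this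
          exact this
        have l2 : |φ p.2 - φ p.1| ≤ (Lφ:ℝ) * ‖z‖ := by
          have := hLφ.dist_le_mul p.2 p.1
          rw [Real.dist_eq, dist_eq_norm] at this
          exact this
        calc |ψ p.2 - ψ p.1| * |φ p.2 - φ p.1| ≤ ((Lψ:ℝ) * ‖z‖) * ((Lφ:ℝ) * ‖z‖) :=
              mul_le_mul l1 l2 (abs_nonneg _) (by positivity)
          _ = C₁ * (‖z‖ * ‖z‖) := by rw [hC₁def]; ring
      have hsq : ‖z‖ ^ (2:ℝ) = ‖z‖ * ‖z‖ := by
        rw [show (2:ℝ) = ((2:ℕ):ℝ) from by norm_num, Real.rpow_natCast]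
        ring
      have key : |N| / ‖z‖ ^ ((d:ℝ)+α) ≤ C₁ * ‖z‖ ^ u := by
        have e1 : |N| / ‖z‖ ^ ((d:ℝ)+α) ≤ (C₁ * (‖z‖ * ‖z‖)) / ‖z‖ ^ ((d:ℝ)+α) := by
          rw [div_eq_mul_inv, div_eq_mul_inv]
          exact mul_le_mul_of_nonneg_right hNle
            (inv_nonneg.2 (Real.rpow_nonneg (norm_nonneg z) _))
        have e2 : C₁ * (‖z‖ * ‖z‖) / ‖z‖ ^ ((d:ℝ)+α) = C₁ * ‖z‖ ^ (2 - ((d:ℝ)+α)) := by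
          rw [Real.rpow_sub hznorm, hsq]
          ring
        have e3 : ‖z‖ ^ (2 - ((d:ℝ)+α)) ≤ ‖z‖ ^ u :=
          Real.rpow_le_rpow_of_exponent_ge hznorm hball.le hu
        calc |N| / ‖z‖ ^ ((d:ℝ)+α) ≤ C₁ * (‖z‖ * ‖z‖) / ‖z‖ ^ ((d:ℝ)+α) := e1
          _ = C₁ * ‖z‖ ^ (2 - ((d:ℝ)+α)) := e2
          _ ≤ C₁ * ‖z‖ ^ u := mul_le_mul_of_nonneg_left e3 hC₁0
      have hrest : 0 ≤ C₂ * (f₂ p.1 * h₂ v z) + C₂ * (f₂ p.2 * h₂ v z) :=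
        add_nonneg (mul_nonneg hC₂0 (mul_nonneg (hf₂0 _) (hh₂0 _ _)))
          (mul_nonneg hC₂0 (mul_nonneg (hf₂0 _) (hh₂0 _ _)))
      have hGval : G u v p = C₁ * ‖z‖ ^ u +
          (C₂ * (f₂ p.1 * h₂ v z) + C₂ * (f₂ p.2 * h₂ v z)) := by
        simp only [hGdef]
        rw [← hzdef, hf₁x, hh₁z, one_mul]
      rw [hGval]
      linarith [key, hrest]
    · -- far regime
      push_neg at hball
      have hh₁z : h₁ u z = 0 := by
        rw [hh₁def]
        exact Set.indicator_of_notMem (by simp [mem_ball_zero_iff, not_lt, hball]) _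
      have hh₂z : h₂ v z = ‖z‖ ^ v := by
        rw [hh₂def]
        refine Set.indicator_of_mem ?_ _
        simp [Metric.mem_ball, dist_zero_right, not_lt, hball]
      have hNle : |N| ≤ C₂ := by
        rw [hNdef, abs_mul]
        have l1 : |ψ p.2 - ψ p.1| ≤ 2 * Mψ := by
          have h' := norm_sub_le (ψ p.2) (ψ p.1)
          rw [Real.norm_eq_abs] at h'
          have := hMψ p.1
          have := hMψ p.2
          simp only [Real.norm_eq_abs] at *
          linarith
        have l2 : |φ p.2 - φ p.1| ≤ 2 * Mφ := by
          have h' := norm_sub_le (φ p.2) (φ p.1)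
          rw [Real.norm_eq_abs] at h'
          have := hMφ p.1
          have := hMφ p.2
          simp only [Real.norm_eq_abs] at *
          linarith
        calc |ψ p.2 - ψ p.1| * |φ p.2 - φ p.1| ≤ (2 * Mψ) * (2 * Mφ) :=
            mul_le_mul l1 l2 (abs_nonneg _) (by linarith)
          _ = C₂ := by rw [hC₂def]
      have hindge : (1:ℝ) ≤ f₂ p.1 + f₂ p.2 := by
        rcases hxy with h | h
        · have hfx : f₂ p.1 = 1 := by rw [hf₂def, Set.indicator_of_mem h]; rfl
          linarith [hf₂0 p.2]
        · have hfx : f₂ p.2 = 1 := by rw [hf₂def, Set.indicator_of_mem h]; rfl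
          linarith [hf₂0 p.1]
      have hGval : G u v p = C₂ * (f₂ p.1 * ‖z‖ ^ v) + C₂ * (f₂ p.2 * ‖z‖ ^ v) := by
        simp only [hGdef]
        rw [← hzdef, hh₁z, hh₂z]
        ring
      calc |N| / ‖z‖ ^ ((d:ℝ)+α) = |N| * ‖z‖ ^ (-((d:ℝ)+α)) := by
            rw [Real.rpow_neg (norm_nonneg z), div_eq_mul_inv]
        _ ≤ C₂ * ‖z‖ ^ v :=
            mul_le_mul hNle (Real.rpow_le_rpow_of_exponent_le hball hv)
              (Real.rpow_nonneg (norm_nonneg z) _) hC₂0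
        _ ≤ C₂ * ((f₂ p.1 + f₂ p.2) * ‖z‖ ^ v) := by
            have h1 : (1:ℝ) * ‖z‖ ^ v ≤ (f₂ p.1 + f₂ p.2) * ‖z‖ ^ v :=
              mul_le_mul_of_nonneg_right hindge (Real.rpow_nonneg (norm_nonneg z) _)
            rw [one_mul] at h1
            exact mul_le_mul_of_nonneg_left h1 hC₂0
        _ = G u v p := by rw [hGval]; ring
  -- measurability
  have hFmeas : ∀ α : ℝ, AEStronglyMeasurable
      (fun p : (EuclideanSpace ℝ (Fin d)) × (EuclideanSpace ℝ (Fin d)) => (ψ p.2 - ψ p.1) * (φ p.2 - φ p.1) / ‖p.2 - p.1‖ ^ ((d : ℝ) + α))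
      (volume : Measure ((EuclideanSpace ℝ (Fin d)) × (EuclideanSpace ℝ (Fin d)))) := by
    intro α
    apply Measurable.aestronglyMeasurable
    have hnum : Measurable (fun p : (EuclideanSpace ℝ (Fin d)) × (EuclideanSpace ℝ (Fin d)) => (ψ p.2 - ψ p.1) * (φ p.2 - φ p.1)) :=
      (((hψ.continuous.comp continuous_snd).sub (hψ.continuous.comp continuous_fst)).mul
        ((hφ.continuous.comp continuous_snd).sub (hφ.continuous.comp continuous_fst))).measurable
    have hden : Measurable (fun p : (EuclideanSpace ℝ (Fin d)) × (EuclideanSpace ℝ (Fin d)) => ‖p.2 - p.1‖ ^ ((d:ℝ)+α)) := by fun_prop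
    exact hnum.div hden
  constructor
  · intro α hα
    obtain ⟨hα0, hα2⟩ := hα
    refine Integrable.mono'
      (hGint (2 - ((d:ℝ)+α)) (-((d:ℝ)+α)) (by linarith) (by linarith))
      (hFmeas α) ?_
    exact Filter.Eventually.of_forall (hFbound α _ _ hα0 le_rfl le_rfl)
  · refine continuousOn_of_forall_continuousAt fun α₀ hα₀ => ?_
    obtain ⟨h0, h2⟩ := hα₀
    refine continuousAt_of_dominated (bound := G (2 - ((d:ℝ) + (α₀+2)/2)) (-((d:ℝ) + α₀/2)))
      (Filter.Eventually.of_forall hFmeas) ?_ (hGint _ _ (by linarith) (by linarith)) ?_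
    · have hmem : Set.Ioo (α₀/2) ((α₀+2)/2) ∈ 𝓝 α₀ := Ioo_mem_nhds (by linarith) (by linarith)
      filter_upwards [hmem] with α hα
      exact Filter.Eventually.of_forall
        (hFbound α _ _ (by linarith [hα.1]) (by linarith [hα.2]) (by linarith [hα.1]))
    · refine Filter.Eventually.of_forall fun p => ?_
      by_cases hz0 : p.2 - p.1 = (0:(EuclideanSpace ℝ (Fin d)))
      · have hp21 : p.2 = p.1 := sub_eq_zero.1 hz0
        have heq : (fun α : ℝ =>
            (ψ p.2 - ψ p.1) * (φ p.2 - φ p.1) / ‖p.2 - p.1‖ ^ ((d:ℝ)+α)) = fun _ => (0:ℝ) := by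
          funext α
          rw [hp21]
          simp
        rw [heq]
        exact continuousAt_const
      · have hzn : (0:ℝ) < ‖p.2 - p.1‖ := norm_pos_iff.2 hz0
        have hden : ContinuousAt (fun α : ℝ => ‖p.2 - p.1‖ ^ ((d:ℝ)+α)) α₀ :=
          ContinuousAt.rpow continuousAt_const (continuousAt_const.add continuousAt_id)
            (Or.inl hzn.ne')
        exact ContinuousAt.div continuousAt_const hden (Real.rpow_pos_of_pos hzn _).ne'
end

section
/- Let D ⊆ ℝ^d be an open set and let ω, ω_1, ω_2, … : [0,∞) → ℝ^d be functions such that 0 < τ_D(ω) < ∞ and, for every rational r with 0 < r < τ_D(ω), inf { dist(ω(s), D^c) : 0 ≤ s ≤ τ_D(ω) − r } > 0. Suppose that for every T > 0 there exist strictly increasing surjective functions λ_n : [0,∞) → [0,∞) with sup_{0 ≤ t ≤ T} |λ_n(t) − t| → 0 and sup_{0 ≤ t ≤ T} |ω_n(t) − ω(λ_n(t))| → 0 as n → ∞. Then liminf_{n→∞} τ_D(ω_n) ≥ τ_D(ω). -/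
open MeasureTheory Real Filter Topology
open scoped ENNReal

/-- The first exit time `τ_D(ω) = inf { t > 0 : ω(t) ∉ D }` of a path `ω` from a set
`D`, valued in `ℝ≥0∞` with the convention `inf ∅ = ∞`. -/
noncomputable def exitTime (d : ℕ) (D : Set (EuclideanSpace ℝ (Fin d)))
    (ω : ℝ → EuclideanSpace ℝ (Fin d)) : ℝ≥0∞ :=
  ⨅ t ∈ { s : ℝ | 0 < s ∧ ω s ∉ D }, ENNReal.ofReal t

/-- The Skorokhod-type time-change convergence hypothesis: for every `T > 0` there are
strictly increasing surjections `λ_n : [0,∞) → [0,∞)` with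
`sup_{0 ≤ t ≤ T} |λ_n(t) − t| → 0` and `sup_{0 ≤ t ≤ T} |ω_n(t) − ω(λ_n(t))| → 0`. -/
def SkorokhodTendsto (d : ℕ) (ωn : ℕ → ℝ → EuclideanSpace ℝ (Fin d))
    (ω : ℝ → EuclideanSpace ℝ (Fin d)) : Prop :=
  ∀ T > (0 : ℝ), ∃ l : ℕ → ℝ → ℝ,
    (∀ n, StrictMonoOn (l n) (Set.Ici 0) ∧ Set.MapsTo (l n) (Set.Ici 0) (Set.Ici 0) ∧
      Set.SurjOn (l n) (Set.Ici 0) (Set.Ici 0)) ∧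
    (∀ ε > (0 : ℝ), ∃ N : ℕ, ∀ n ≥ N, ∀ t ∈ Set.Icc (0 : ℝ) T,
      |l n t - t| < ε ∧ dist (ωn n t) (ω (l n t)) < ε)

/-- The first half of **Lemma 6.2** (eq. 6.3): if `D ⊆ ℝ^d` is open, `ω` has finite
positive exit time and stays uniformly away from `D^c` on `[0, τ_D(ω) − r]` for every
rational `0 < r < τ_D(ω)`, and `ω_n → ω` in the Skorokhod sense, then
`liminf_n τ_D(ω_n) ≥ τ_D(ω)`. -/
theorem exitTime_le_liminf
    (d : ℕ) (D : Set (EuclideanSpace ℝ (Fin d))) (hD : IsOpen D)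
    (ω : ℝ → EuclideanSpace ℝ (Fin d)) (ωn : ℕ → ℝ → EuclideanSpace ℝ (Fin d))
    (hτ_pos : 0 < exitTime d D ω) (hτ_fin : exitTime d D ω < ⊤)
    (hstay : ∀ r : ℚ, 0 < (r : ℝ) → (r : ℝ) < (exitTime d D ω).toReal →
      ∃ ε > (0 : ℝ), ∀ s ∈ Set.Icc (0 : ℝ) ((exitTime d D ω).toReal - (r : ℝ)),
        ε ≤ Metric.infDist (ω s) Dᶜ)
    (hconv : SkorokhodTendsto d ωn ω) :
    exitTime d D ω ≤ Filter.liminf (fun n => exitTime d D (ωn n)) atTop := by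

  set t0 : ℝ := (exitTime d D ω).toReal with ht0
  have ht0_pos : 0 < t0 := ENNReal.toReal_pos hτ_pos.ne' hτ_fin.ne
  have hτeq : exitTime d D ω = ENNReal.ofReal t0 := (ENNReal.ofReal_toReal hτ_fin.ne).symm
  refine le_of_forall_lt_imp_le_of_dense (fun c hc => ?_)
  have hc_fin : c ≠ ⊤ := (hc.trans hτ_fin).ne
  have hc_lt : c.toReal < t0 := by
    have := hc
    rw [hτeq] at this
    exact (ENNReal.lt_ofReal_iff_toReal_lt hc_fin).mp this
  obtain ⟨r, hr0, hr1⟩ := exists_rat_btwn (by linarith [ENNReal.toReal_nonneg (a := c)] :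
    (0 : ℝ) < (t0 - c.toReal) / 2)
  have hr0' : (0 : ℝ) < (r : ℝ) := by exact_mod_cast hr0
  have hr_lt : (r : ℝ) < t0 := by
    have hcnn : 0 ≤ c.toReal := ENNReal.toReal_nonneg
    linarith
  obtain ⟨ε, hε, hεbound⟩ := hstay r hr0' hr_lt
  obtain ⟨l, hl, happrox⟩ := hconv t0 ht0_pos
  obtain ⟨N, hN⟩ := happrox (min ε (r : ℝ)) (lt_min hε hr0')
  have key : ∀ n ≥ N, ENNReal.ofReal (t0 - 2 * r) ≤ exitTime d D (ωn n) := by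
    intro n hn
    refine le_iInf₂ (fun s hs => ?_)
    obtain ⟨hs0, hsD⟩ := hs
    rcases le_or_gt s (t0 - 2 * r) with hsle | hslt
    · exfalso
      have hsIcc : s ∈ Set.Icc (0 : ℝ) t0 := ⟨hs0.le, by linarith⟩
      obtain ⟨hl1, hl2⟩ := hN n hn s hsIcc
      have hlns_nonneg : 0 ≤ l n s := (hl n).2.1 (by exact hs0.le : s ∈ Set.Ici (0:ℝ))
      have hlns_le : l n s ≤ t0 - (r : ℝ) := by
        have h := (abs_lt.mp (lt_of_lt_of_le hl1 (min_le_right ε (r:ℝ)))).2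
        linarith
      have hinf : ε ≤ Metric.infDist (ω (l n s)) Dᶜ :=
        hεbound _ ⟨hlns_nonneg, hlns_le⟩
      have hmem : ωn n s ∈ Dᶜ := hsD
      have : Metric.infDist (ω (l n s)) Dᶜ ≤ dist (ω (l n s)) (ωn n s) :=
        Metric.infDist_le_dist_of_mem hmem
      rw [dist_comm] at this
      have hlt : dist (ωn n s) (ω (l n s)) < ε :=
        lt_of_lt_of_le hl2 (min_le_left _ _)
      linarith
    · exact ENNReal.ofReal_le_ofReal hslt.le
  have hev : ∀ᶠ n in atTop, ENNReal.ofReal (t0 - 2 * r) ≤ exitTime d D (ωn n) :=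
    eventually_atTop.mpr ⟨N, key⟩
  have hlim : ENNReal.ofReal (t0 - 2 * r) ≤
      Filter.liminf (fun n => exitTime d D (ωn n)) atTop :=
    le_liminf_of_le (by isBoundedDefault) hev
  refine le_trans ?_ hlim
  have : c = ENNReal.ofReal c.toReal := (ENNReal.ofReal_toReal hc_fin).symm
  rw [this]
  exact ENNReal.ofReal_le_ofReal (by linarith)
end

section
/- Let D ⊆ ℝ^d be an open set and let ω, ω_1, ω_2, … : [0,∞) → ℝ^d be functions such that 0 < τ_D(ω) < ∞, ω is right continuous, and ω(τ_D(ω)) lies in the complement of the closure of D. Suppose that for every T > 0 there exist strictly increasing surjective functions λ_n : [0,∞) → [0,∞) with sup_{0 ≤ t ≤ T} |λ_n(t) − t| → 0 and sup_{0 ≤ t ≤ T} |ω_n(t) − ω(λ_n(t))| → 0 as n → ∞. Then limsup_{n→∞} τ_D(ω_n) ≤ τ_D(ω). -/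
open MeasureTheory Real Filter Topology
open scoped ENNReal

/-- The second half of **Lemma 6.2** (eq. 6.5): if `D ⊆ ℝ^d` is open, `ω` is right
continuous with finite positive exit time, `ω(τ_D(ω))` lies outside the closure of `D`,
and `ω_n → ω` in the Skorokhod sense, then `limsup_n τ_D(ω_n) ≤ τ_D(ω)`. -/
theorem limsup_exitTime_le
    (d : ℕ) (D : Set (EuclideanSpace ℝ (Fin d))) (hD : IsOpen D)
    (ω : ℝ → EuclideanSpace ℝ (Fin d)) (ωn : ℕ → ℝ → EuclideanSpace ℝ (Fin d))
    (hτ_pos : 0 < exitTime d D ω) (hτ_fin : exitTime d D ω < ⊤)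
    (hrc : ∀ t : ℝ, 0 ≤ t → ContinuousWithinAt ω (Set.Ici t) t)
    (hout : ω ((exitTime d D ω).toReal) ∉ closure D)
    (hconv : SkorokhodTendsto d ωn ω) :
    Filter.limsup (fun n => exitTime d D (ωn n)) atTop ≤ exitTime d D ω := by
  set τ := exitTime d D ω with hτdef
  set τr := τ.toReal with hτr
  have hτr0 : (0:ℝ) ≤ τr := ENNReal.toReal_nonneg
  -- find a radius r around ω τr avoiding closure D
  obtain ⟨r, hr0, hball⟩ :=
    Metric.isOpen_iff.1 (isOpen_compl_iff.2 isClosed_closure) _ hout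
  -- right continuity window
  have hrc' := hrc τr hτr0
  have hmem : ω ⁻¹' Metric.ball (ω τr) (r/2) ∈ 𝓝[Set.Ici τr] τr :=
    hrc' (Metric.ball_mem_nhds _ (by positivity))
  obtain ⟨η, hη0, hηsub⟩ := Metric.mem_nhdsWithin_iff.1 hmem
  have key : ∀ ε' > (0:ℝ), ∀ᶠ n in atTop,
      exitTime d D (ωn n) ≤ τ + ENNReal.ofReal ε' := by
    intro ε' hε'
    set m := min (ε'/2) (η/2) with hm
    have hm0 : 0 < m := lt_min (by linarith) (by linarith)
    have hmε : m ≤ ε'/2 := min_le_left _ _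
    have hmη : m ≤ η/2 := min_le_right _ _
    set T := τr + η + 1 with hT
    obtain ⟨l, hl, hl2⟩ := hconv T (by linarith)
    set ε₀ := min (r/2) (min m 1) with hε₀
    have hε₀0 : 0 < ε₀ := lt_min (by positivity) (lt_min hm0 one_pos)
    have hε₀r : ε₀ ≤ r/2 := min_le_left _ _
    have hε₀m : ε₀ ≤ m := le_trans (min_le_right _ _) (min_le_left _ _)
    have hε₀1 : ε₀ ≤ 1 := le_trans (min_le_right _ _) (min_le_right _ _)
    obtain ⟨N, hN⟩ := hl2 ε₀ hε₀0
    filter_upwards [eventually_ge_atTop N] with n hn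
    obtain ⟨hmono, hmaps, hsurj⟩ := hl n
    have hs₀ : τr + m ∈ Set.Ici (0:ℝ) := by
      simp only [Set.mem_Ici]; linarith
    obtain ⟨t, ht0, hlt⟩ := hsurj hs₀
    have ht0' : (0:ℝ) ≤ t := ht0
    -- t ≤ T
    have hTmem : T ∈ Set.Icc (0:ℝ) T := ⟨by linarith, le_refl T⟩
    have hTT := (hN n hn T hTmem).1
    have htT : t ≤ T := by
      by_contra h
      push_neg at h
      have h1 : l n T < l n t :=
        hmono (Set.mem_Ici.2 (by linarith : (0:ℝ) ≤ T)) ht0 h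
      rw [hlt] at h1
      have h2 : l n T > T - ε₀ := by
        have := abs_lt.1 hTT; linarith
      have : T - ε₀ < τr + m := by linarith
      rw [hT] at this
      linarith
    have hb := hN n hn t ⟨ht0', htT⟩
    have habs : |τr + m - t| < ε₀ := by
      have := hb.1; rw [hlt] at this
      exact this
    have habs' := abs_lt.1 habs
    have htpos : 0 < t := by linarith
    have htub : t < τr + ε' := by linarith
    -- ωn n t ∉ D
    have hsmem : τr + m ∈ Metric.ball τr η ∩ Set.Ici τr := by
      constructor
      · rw [Metric.mem_ball, Real.dist_eq]
        rw [abs_of_nonneg (by linarith : (0:ℝ) ≤ τr + m - τr)]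
        linarith
      · simp only [Set.mem_Ici]; linarith
    have hωs : dist (ω (τr + m)) (ω τr) < r/2 := hηsub hsmem
    have hωnt : dist (ωn n t) (ω (l n t)) < ε₀ := hb.2
    rw [hlt] at hωnt
    have hdist : dist (ωn n t) (ω τr) < r := by
      calc dist (ωn n t) (ω τr) ≤ dist (ωn n t) (ω (τr + m)) + dist (ω (τr + m)) (ω τr) :=
            dist_triangle _ _ _
        _ < ε₀ + r/2 := add_lt_add hωnt hωs
        _ ≤ r/2 + r/2 := by linarith
        _ = r := by ring
    have hnotD : ωn n t ∉ D := by
      intro hD'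
      have : ωn n t ∈ (closure D)ᶜ := hball hdist
      exact this (subset_closure hD')
    -- conclude
    have hle : exitTime d D (ωn n) ≤ ENNReal.ofReal t := by
      apply iInf_le_of_le t
      apply iInf_le_of_le ⟨htpos, hnotD⟩
      exact le_refl _
    calc exitTime d D (ωn n) ≤ ENNReal.ofReal t := hle
      _ ≤ ENNReal.ofReal (τr + ε') := ENNReal.ofReal_le_ofReal (le_of_lt htub)
      _ = ENNReal.ofReal τr + ENNReal.ofReal ε' := ENNReal.ofReal_add hτr0 (le_of_lt hε')
      _ = τ + ENNReal.ofReal ε' := by rw [hτr, ENNReal.ofReal_toReal hτ_fin.ne]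
  have hlim : ∀ ε' > (0:ℝ),
      Filter.limsup (fun n => exitTime d D (ωn n)) atTop ≤ τ + ENNReal.ofReal ε' :=
    fun ε' h => Filter.limsup_le_of_le (by isBoundedDefault) (key ε' h)
  refine ENNReal.le_of_forall_pos_le_add fun ε hε _ => ?_
  have h := hlim ε (by exact_mod_cast hε)
  rwa [ENNReal.ofReal_coe_nnreal] at h
end
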